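/- Let F : 2^U → 2^V be the map induced by a weighted matching instance (G = (U,V;E), w) in which all matchings have pairwise distinct weights, and let 𝓕 := { F(U') : U' ⊆ U }. Then 𝓕 is accessible: for every nonempty X ∈ 𝓕 there exists v ∈ X with X∖{v} ∈ 𝓕. -/
import Mathlib


open scoped Classical

/-- `M` is a matching with edges inside the edge set `E`:
no two distinct edges of `M` share a left or a right endpoint. -/
def IsMatching {U V : Type*} (E M : Finset (U × V)) : Prop :=
  M ⊆ E ∧ ∀ e₁ ∈ M, ∀ e₂ ∈ M, (e₁.1 = e₂.1 ∨ e₁.2 = e₂.2) → e₁ = e₂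

/-- The edge set of the subgraph `G[U' ∪ V]` induced by deleting
the left vertices outside `U'` (and their incident edges). -/
noncomputable def restrictL {U V : Type*} (E : Finset (U × V)) (U' : Finset U) : Finset (U × V) :=
  E.filter (fun e => e.1 ∈ U')

/-- The weight of a matching: the sum of the weights of its edges. -/
noncomputable def mWeight {U V : Type*} (w : U × V → ℝ) (M : Finset (U × V)) : ℝ :=
  ∑ e ∈ M, w e

/-- `M` is a maximum-weight matching of the graph with edge set `E`. -/
def IsMaxMatching {U V : Type*} (E : Finset (U × V)) (w : U × V → ℝ)
    (M : Finset (U × V)) : Prop :=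
  IsMatching E M ∧ ∀ M' : Finset (U × V), IsMatching E M' → mWeight w M' ≤ mWeight w M

/-- All matchings of the graph with edge set `E` have pairwise distinct weights. -/
def DistinctWeights {U V : Type*} (E : Finset (U × V)) (w : U × V → ℝ) : Prop :=
  ∀ M₁ M₂ : Finset (U × V), IsMatching E M₁ → IsMatching E M₂ → M₁ ≠ M₂ →
    mWeight w M₁ ≠ mWeight w M₂

/-- The codomain `{ F(U') : U' ⊆ U }` of the map `F` induced by the weighted
matching instance: the family of all sets of right vertices matched by the
(unique) maximum-weight matching `MM(G, w; U')` of a subgraph `G[U' ∪ V]`. -/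
def mmFamily {U V : Type*} (E : Finset (U × V)) (w : U × V → ℝ) : Set (Finset V) :=
  {X | ∃ (U' : Finset U) (M : Finset (U × V)),
    IsMaxMatching (restrictL E U') w M ∧ X = M.image Prod.snd}

section Aux

variable {U V : Type*}

lemma mem_restrictL {E : Finset (U × V)} {U' : Finset U} {e : U × V} :
    e ∈ restrictL E U' ↔ e ∈ E ∧ e.1 ∈ U' := by
  simp [restrictL]

lemma restrictL_subset (E : Finset (U × V)) (U' : Finset U) : restrictL E U' ⊆ E :=
  Finset.filter_subset _ _

lemma restrictL_mono (E : Finset (U × V)) {U₁ U₂ : Finset U} (h : U₁ ⊆ U₂) :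
    restrictL E U₁ ⊆ restrictL E U₂ := by
  intro e he
  rw [mem_restrictL] at he ⊢
  exact ⟨he.1, h he.2⟩

lemma IsMatching.mono {E₁ E₂ M : Finset (U × V)} (h : E₁ ⊆ E₂) (hM : IsMatching E₁ M) :
    IsMatching E₂ M :=
  ⟨hM.1.trans h, hM.2⟩

lemma IsMatching.left_unique {E M : Finset (U × V)} (h : IsMatching E M)
    {u : U} {v v' : V} (h1 : (u, v) ∈ M) (h2 : (u, v') ∈ M) : v = v' :=
  congrArg Prod.snd (h.2 _ h1 _ h2 (Or.inl rfl))

lemma IsMatching.right_unique {E M : Finset (U × V)} (h : IsMatching E M)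
    {u u' : U} {v : V} (h1 : (u, v) ∈ M) (h2 : (u', v) ∈ M) : u = u' :=
  congrArg Prod.fst (h.2 _ h1 _ h2 (Or.inr rfl))

lemma mem_image_snd {M : Finset (U × V)} {v : V} :
    v ∈ M.image Prod.snd ↔ ∃ u, (u, v) ∈ M := by
  constructor
  · rintro h
    obtain ⟨e, he, rfl⟩ := Finset.mem_image.1 h
    exact ⟨e.1, he⟩
  · rintro ⟨u, hu⟩
    exact Finset.mem_image.2 ⟨(u, v), hu, rfl⟩

lemma mem_image_fst {M : Finset (U × V)} {u : U} :
    u ∈ M.image Prod.fst ↔ ∃ v, (u, v) ∈ M := by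
  constructor
  · rintro h
    obtain ⟨e, he, rfl⟩ := Finset.mem_image.1 h
    exact ⟨e.2, he⟩
  · rintro ⟨v, hv⟩
    exact Finset.mem_image.2 ⟨(u, v), hv, rfl⟩

lemma exists_maxMatching [Fintype U] [Fintype V] (E₀ : Finset (U × V)) (w : U × V → ℝ) :
    ∃ M, IsMaxMatching E₀ w M := by
  obtain ⟨M, hM, hmax⟩ := Finset.exists_max_image
    (Finset.univ.filter (fun M => IsMatching E₀ M)) (mWeight w)
    ⟨∅, Finset.mem_filter.2 ⟨Finset.mem_univ _, Finset.empty_subset _, by simp⟩⟩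
  exact ⟨M, (Finset.mem_filter.1 hM).2,
    fun M' hM' => hmax M' (Finset.mem_filter.2 ⟨Finset.mem_univ _, hM'⟩)⟩

lemma maxMatching_restrict_image {E : Finset (U × V)} {U₀ : Finset U} {w : U × V → ℝ}
    {M : Finset (U × V)} (h : IsMaxMatching (restrictL E U₀) w M) :
    IsMaxMatching (restrictL E (M.image Prod.fst)) w M := by
  have hsub : M.image Prod.fst ⊆ U₀ := by
    intro u hu
    obtain ⟨v, hv⟩ := mem_image_fst.1 hu
    exact (mem_restrictL.1 (h.1.1 hv)).2
  refine ⟨⟨fun e he => mem_restrictL.2 ⟨restrictL_subset E U₀ (h.1.1 he),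
      Finset.mem_image.2 ⟨e, he, rfl⟩⟩, h.1.2⟩, ?_⟩
  intro M' hM'
  exact h.2 M' (hM'.mono (restrictL_mono E hsub))

/-- The key weight-exchange comparison. -/
lemma exchange_lt {E E₁ : Finset (U × V)} {w : U × V → ℝ}
    (hdist : DistinctWeights E w) (hE₁ : E₁ ⊆ E)
    {A F G : Finset (U × V)} (hA : IsMaxMatching E₁ w A)
    (hF : F ⊆ A) (hdisj : Disjoint (A \ F) G)
    (hN : IsMatching E₁ ((A \ F) ∪ G)) (hne : (A \ F) ∪ G ≠ A) :
    mWeight w G < mWeight w F := by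
  have hle : mWeight w ((A \ F) ∪ G) ≤ mWeight w A := hA.2 _ hN
  have hnee : mWeight w ((A \ F) ∪ G) ≠ mWeight w A :=
    hdist _ _ (hN.mono hE₁) (hA.1.mono hE₁) hne
  have hw : mWeight w ((A \ F) ∪ G) = mWeight w A - mWeight w F + mWeight w G := by
    rw [mWeight, Finset.sum_union hdisj, Finset.sum_sdiff_eq_sub hF]
    rfl
  rw [hw] at hle hnee
  have : mWeight w A - mWeight w F + mWeight w G < mWeight w A := lt_of_le_of_ne hle hnee
  linarith

/-- Two chains of a backward-functional relation with the same endpoint and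
unreachable starting points must coincide. -/
lemma chain_eq {α : Type*} {R : α → α → Prop}
    (hinj : ∀ x x' y, R x y → R x' y → x = x') :
    ∀ (k l : ℕ) (p q : ℕ → α), (∀ i < k, R (p i) (p (i + 1))) →
      (∀ j < l, R (q j) (q (j + 1))) →
      (∀ x, ¬ R x (p 0)) → (∀ x, ¬ R x (q 0)) → p k = q l → k = l ∧ p 0 = q 0 := by
  intro k
  induction k with
  | zero =>
    intro l p q hp hq hp0 hq0 hend
    cases l with
    | zero => exact ⟨rfl, hend⟩
    | succ m =>
      exfalso
      exact hp0 (q m) (hend ▸ hq m (Nat.lt_succ_self m))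
  | succ n ih =>
    intro l p q hp hq hp0 hq0 hend
    cases l with
    | zero =>
      exfalso
      exact hq0 (p n) (hend ▸ hp n (Nat.lt_succ_self n))
    | succ m =>
      have hpq : p n = q m :=
        hinj _ _ _ (hp n (Nat.lt_succ_self n)) (hend ▸ hq m (Nat.lt_succ_self m))
      obtain ⟨h1, h2⟩ := ih m p q (fun i hi => hp i (hi.trans (Nat.lt_succ_self n)))
        (fun j hj => hq j (hj.trans (Nat.lt_succ_self m))) hp0 hq0 hpq
      exact ⟨by omega, h2⟩

end Aux

lemma image_snd_subset {U V : Type*} [Fintype U] [Fintype V] {E : Finset (U × V)}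
    {w : U × V → ℝ} (hdist : DistinctWeights E w) {U' U'' : Finset U} (hsub : U'' ⊆ U')
    {A B : Finset (U × V)}
    (hA : IsMaxMatching (restrictL E U') w A) (hB : IsMaxMatching (restrictL E U'') w B)
    (hUA : U' ⊆ A.image Prod.fst) :
    B.image Prod.snd ⊆ A.image Prod.snd := by
  intro v0 hv0B
  by_contra hv0A
  have hRinj : ∀ x x' y : V, (∃ p, (p, x) ∈ B ∧ (p, y) ∈ A) →
      (∃ p, (p, x') ∈ B ∧ (p, y) ∈ A) → x = x' := by
    rintro x x' y ⟨p, hpB, hpA⟩ ⟨p', hpB', hpA'⟩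
    have hpp : p = p' := hA.1.right_unique hpA hpA'
    subst hpp
    exact hB.1.left_unique hpB hpB'
  have hstart : ∀ x, ¬ ∃ p, (p, x) ∈ B ∧ (p, v0) ∈ A := by
    rintro x ⟨p, _, hpA⟩
    exact hv0A (mem_image_snd.2 ⟨p, hpA⟩)
  have hstep0 : ∀ x : V, ∃ y, (∃ p, (p, x) ∈ B) → ∃ p, (p, x) ∈ B ∧ (p, y) ∈ A := by
    intro x
    by_cases h : ∃ p, (p, x) ∈ B
    · obtain ⟨p, hp⟩ := h
      have hpU : p ∈ U'' := (mem_restrictL.1 (hB.1.1 hp)).2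
      obtain ⟨y, hy⟩ := mem_image_fst.1 (hUA (hsub hpU))
      exact ⟨y, fun _ => ⟨p, hp, hy⟩⟩
    · exact ⟨v0, fun h' => absurd h' h⟩
  choose step hstep using hstep0
  set vs : ℕ → V := fun n => step^[n] v0 with hvs
  have hvssucc : ∀ n, vs (n + 1) = step (vs n) := fun n => Function.iterate_succ_apply' step n v0
  have hvs0 : vs 0 = v0 := rfl
  have hexk : ∃ n, ¬ ∃ p, (p, vs n) ∈ B := by
    by_contra h
    push_neg at h
    have hch : ∀ n, ∃ p, (p, vs n) ∈ B ∧ (p, vs (n + 1)) ∈ A := by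
      intro n
      rw [hvssucc n]
      exact hstep (vs n) ⟨(h n).choose, (h n).choose_spec⟩
    obtain ⟨i, j, hij, heq⟩ := Finite.exists_ne_map_eq_of_infinite vs
    exact hij (chain_eq hRinj i j vs vs (fun n _ => hch n) (fun n _ => hch n)
      hstart hstart heq).1
  set k := Nat.find hexk with hkdef
  have hkend : ¬ ∃ p, (p, vs k) ∈ B := Nat.find_spec hexk
  have hkmem : ∀ n < k, ∃ p, (p, vs n) ∈ B := fun n hn => not_not.1 (Nat.find_min hexk hn)
  have hkpos : 0 < k := by
    rcases Nat.eq_zero_or_pos k with h0 | h0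
    · exfalso
      obtain ⟨p, hp⟩ := mem_image_snd.1 hv0B
      exact hkend ⟨p, by rw [h0, hvs0]; exact hp⟩
    · exact h0
  have hchain : ∀ n < k, ∃ p, (p, vs n) ∈ B ∧ (p, vs (n + 1)) ∈ A := by
    intro n hn
    rw [hvssucc n]
    exact hstep (vs n) (hkmem n hn)
  have hvsinj : ∀ i, i ≤ k → ∀ j, j ≤ k → vs i = vs j → i = j := by
    intro i hi j hj h
    exact (chain_eq hRinj i j vs vs (fun n hn => hchain n (lt_of_lt_of_le hn hi))
      (fun n hn => hchain n (lt_of_lt_of_le hn hj)) hstart hstart h).1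
  have huu0 : ∀ n, ∃ p, n < k → (p, vs n) ∈ B ∧ (p, vs (n + 1)) ∈ A := by
    intro n
    by_cases h : n < k
    · obtain ⟨p, h1, h2⟩ := hchain n h
      exact ⟨p, fun _ => ⟨h1, h2⟩⟩
    · obtain ⟨p, _, _⟩ := hchain 0 hkpos
      exact ⟨p, fun h' => absurd h' h⟩
  choose uu huu using huu0
  have huuB : ∀ n, n < k → (uu n, vs n) ∈ B := fun n hn => (huu n hn).1
  have huuA : ∀ n, n < k → (uu n, vs (n + 1)) ∈ A := fun n hn => (huu n hn).2
  set Es := (Finset.range k).image (fun i => (uu i, vs i)) with hEsdef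
  set Fs := (Finset.range k).image (fun i => (uu i, vs (i + 1))) with hFsdef
  have hEsmem : ∀ i, i < k → (uu i, vs i) ∈ Es :=
    fun i hi => Finset.mem_image.2 ⟨i, Finset.mem_range.2 hi, rfl⟩
  have hFsmem : ∀ i, i < k → (uu i, vs (i + 1)) ∈ Fs :=
    fun i hi => Finset.mem_image.2 ⟨i, Finset.mem_range.2 hi, rfl⟩
  have hEselim : ∀ e ∈ Es, ∃ i, i < k ∧ e = (uu i, vs i) := by
    intro e he
    obtain ⟨i, hi, rfl⟩ := Finset.mem_image.1 he
    exact ⟨i, Finset.mem_range.1 hi, rfl⟩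
  have hFselim : ∀ e ∈ Fs, ∃ i, i < k ∧ e = (uu i, vs (i + 1)) := by
    intro e he
    obtain ⟨i, hi, rfl⟩ := Finset.mem_image.1 he
    exact ⟨i, Finset.mem_range.1 hi, rfl⟩
  have hEsB : Es ⊆ B := by
    intro e he
    obtain ⟨i, hi, rfl⟩ := hEselim e he
    exact huuB i hi
  have hFsA : Fs ⊆ A := by
    intro e he
    obtain ⟨i, hi, rfl⟩ := hFselim e he
    exact huuA i hi
  -- any A-edge touching the walk is in Fs
  have hmix : ∀ e₁ ∈ A, ∀ i, i < k → (e₁.1 = uu i ∨ e₁.2 = vs i) → e₁ ∈ Fs := by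
    rintro ⟨q, y⟩ he₁ i hi (h | h)
    · simp only at h
      subst h
      have := hA.1.left_unique he₁ (huuA i hi)
      subst this
      exact hFsmem i hi
    · simp only at h
      subst h
      cases i with
      | zero => exact absurd (mem_image_snd.2 ⟨q, he₁⟩) hv0A
      | succ m =>
        have hm : m < k := (Nat.lt_succ_self m).trans hi
        have := hA.1.right_unique he₁ (huuA m hm)
        subst this
        exact hFsmem m hm
  -- any B-edge touching the walk (shifted) is in Es
  have hmix' : ∀ e₁ ∈ B, ∀ i, i < k → (e₁.1 = uu i ∨ e₁.2 = vs (i + 1)) → e₁ ∈ Es := by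
    rintro ⟨q, y⟩ he₁ i hi (h | h)
    · simp only at h
      subst h
      have := hB.1.left_unique he₁ (huuB i hi)
      subst this
      exact hEsmem i hi
    · simp only at h
      subst h
      by_cases hik : i + 1 < k
      · have := hB.1.right_unique he₁ (huuB (i + 1) hik)
        subst this
        exact hEsmem (i + 1) hik
      · have hik' : i + 1 = k := by omega
        exact absurd ⟨q, hik' ▸ he₁⟩ hkend
  have hdisj1 : Disjoint (A \ Fs) Es := by
    rw [Finset.disjoint_left]
    intro e he heE
    obtain ⟨hA', hnF⟩ := Finset.mem_sdiff.1 he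
    obtain ⟨i, hi, rfl⟩ := hEselim e heE
    exact hnF (hmix _ hA' i hi (Or.inl rfl))
  have hdisj2 : Disjoint (B \ Es) Fs := by
    rw [Finset.disjoint_left]
    intro e he heF
    obtain ⟨hB', hnE⟩ := Finset.mem_sdiff.1 he
    obtain ⟨i, hi, rfl⟩ := hFselim e heF
    exact hnE (hmix' _ hB' i hi (Or.inl rfl))
  have hNmatch : IsMatching (restrictL E U') ((A \ Fs) ∪ Es) := by
    constructor
    · intro e he
      rcases Finset.mem_union.1 he with h | h
      · exact hA.1.1 (Finset.mem_sdiff.1 h).1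
      · exact restrictL_mono E hsub (hB.1.1 (hEsB h))
    · intro e₁ h₁ e₂ h₂ hsh
      rcases Finset.mem_union.1 h₁ with h₁ | h₁ <;> rcases Finset.mem_union.1 h₂ with h₂ | h₂
      · exact hA.1.2 _ (Finset.mem_sdiff.1 h₁).1 _ (Finset.mem_sdiff.1 h₂).1 hsh
      · exfalso
        obtain ⟨i, hi, rfl⟩ := hEselim _ h₂
        exact (Finset.mem_sdiff.1 h₁).2 (hmix _ (Finset.mem_sdiff.1 h₁).1 i hi hsh)
      · exfalso
        obtain ⟨i, hi, rfl⟩ := hEselim _ h₁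
        exact (Finset.mem_sdiff.1 h₂).2
          (hmix _ (Finset.mem_sdiff.1 h₂).1 i hi (hsh.imp Eq.symm Eq.symm))
      · exact hB.1.2 _ (hEsB h₁) _ (hEsB h₂) hsh
  have hNne : (A \ Fs) ∪ Es ≠ A := by
    intro h
    have h0 : (uu 0, vs 0) ∈ A := h ▸ Finset.mem_union_right _ (hEsmem 0 hkpos)
    exact hv0A (mem_image_snd.2 ⟨uu 0, h0⟩)
  have hlt1 : mWeight w Es < mWeight w Fs :=
    exchange_lt hdist (restrictL_subset E U') hA hFsA hdisj1 hNmatch hNne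
  have hN'match : IsMatching (restrictL E U'') ((B \ Es) ∪ Fs) := by
    constructor
    · intro e he
      rcases Finset.mem_union.1 he with h | h
      · exact hB.1.1 (Finset.mem_sdiff.1 h).1
      · obtain ⟨i, hi, rfl⟩ := hFselim _ h
        refine mem_restrictL.2 ⟨restrictL_subset E U' (hA.1.1 (huuA i hi)), ?_⟩
        exact (mem_restrictL.1 (hB.1.1 (huuB i hi))).2
    · intro e₁ h₁ e₂ h₂ hsh
      rcases Finset.mem_union.1 h₁ with h₁ | h₁ <;> rcases Finset.mem_union.1 h₂ with h₂ | h₂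
      · exact hB.1.2 _ (Finset.mem_sdiff.1 h₁).1 _ (Finset.mem_sdiff.1 h₂).1 hsh
      · exfalso
        obtain ⟨i, hi, rfl⟩ := hFselim _ h₂
        exact (Finset.mem_sdiff.1 h₁).2 (hmix' _ (Finset.mem_sdiff.1 h₁).1 i hi hsh)
      · exfalso
        obtain ⟨i, hi, rfl⟩ := hFselim _ h₁
        exact (Finset.mem_sdiff.1 h₂).2
          (hmix' _ (Finset.mem_sdiff.1 h₂).1 i hi (hsh.imp Eq.symm Eq.symm))
      · exact hA.1.2 _ (hFsA h₁) _ (hFsA h₂) hsh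
  have hN'ne : (B \ Es) ∪ Fs ≠ B := by
    intro h
    have hk1 : k - 1 < k := Nat.sub_lt hkpos one_pos
    have hk2 : k - 1 + 1 = k := by omega
    have h0 : (uu (k - 1), vs (k - 1 + 1)) ∈ B :=
      h ▸ Finset.mem_union_right _ (hFsmem (k - 1) hk1)
    rw [hk2] at h0
    exact hkend ⟨uu (k - 1), h0⟩
  have hlt2 : mWeight w Fs < mWeight w Es :=
    exchange_lt hdist (restrictL_subset E U'') hB hEsB hdisj2 hN'match hN'ne
  linarith

lemma lost_unique {U V : Type*} [Fintype U] [Fintype V] {E : Finset (U × V)}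
    {w : U × V → ℝ} (hdist : DistinctWeights E w) {U' : Finset U} {u : U}
    {A B : Finset (U × V)}
    (hA : IsMaxMatching (restrictL E U') w A)
    (hB : IsMaxMatching (restrictL E (U'.erase u)) w B)
    (hBA : B.image Prod.snd ⊆ A.image Prod.snd)
    {a b : V} (ha : a ∈ A.image Prod.snd) (hanB : a ∉ B.image Prod.snd)
    (hb : b ∈ A.image Prod.snd) (hbnB : b ∉ B.image Prod.snd) : a = b := by
  have hsub : U'.erase u ⊆ U' := Finset.erase_subset u U'
  have hR'inj : ∀ x x' y : U, (∃ s, (x, s) ∈ B ∧ (y, s) ∈ A) →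
      (∃ s, (x', s) ∈ B ∧ (y, s) ∈ A) → x = x' := by
    rintro x x' y ⟨s, hsB, hsA⟩ ⟨t, htB, htA⟩
    have hst : s = t := hA.1.left_unique hsA htA
    subst hst
    exact hB.1.right_unique hsB htB
  -- walk construction: every lost right vertex is connected to u by an alternating walk
  have walk : ∀ c : V, c ∈ A.image Prod.snd → c ∉ B.image Prod.snd →
      ∃ (k : ℕ) (p : ℕ → U), (p 0, c) ∈ A ∧
        (∀ i, i < k → ∃ x, (p i, x) ∈ B ∧ (p (i + 1), x) ∈ A) ∧ p k = u := by
    intro c hc hcB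
    obtain ⟨q0, hq0⟩ := mem_image_snd.1 hc
    have hstart : ∀ x, ¬ ∃ s, (x, s) ∈ B ∧ (q0, s) ∈ A := by
      rintro x ⟨s, hsB, hsA⟩
      have : c = s := hA.1.left_unique hq0 hsA
      subst this
      exact hcB (mem_image_snd.2 ⟨x, hsB⟩)
    have hstep0 : ∀ q : U, ∃ r, (∃ x, (q, x) ∈ B) → ∃ x, (q, x) ∈ B ∧ (r, x) ∈ A := by
      intro q
      by_cases h : ∃ x, (q, x) ∈ B
      · obtain ⟨x, hx⟩ := h
        obtain ⟨r, hr⟩ := mem_image_snd.1 (hBA (mem_image_snd.2 ⟨q, hx⟩))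
        exact ⟨r, fun _ => ⟨x, hx, hr⟩⟩
      · exact ⟨q0, fun h' => absurd h' h⟩
    choose step hstep using hstep0
    set p : ℕ → U := fun n => step^[n] q0 with hp
    have hpsucc : ∀ n, p (n + 1) = step (p n) := fun n => Function.iterate_succ_apply' step n q0
    have hp0 : p 0 = q0 := rfl
    have hexk : ∃ n, ¬ ∃ x, (p n, x) ∈ B := by
      by_contra h
      push_neg at h
      have hch : ∀ n, ∃ x, (p n, x) ∈ B ∧ (p (n + 1), x) ∈ A := by
        intro n
        rw [hpsucc n]
        exact hstep (p n) ⟨(h n).choose, (h n).choose_spec⟩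
      obtain ⟨i, j, hij, heq⟩ := Finite.exists_ne_map_eq_of_infinite p
      exact hij (chain_eq hR'inj i j p p (fun n _ => hch n) (fun n _ => hch n)
        hstart hstart heq).1
    set k := Nat.find hexk with hkdef
    have hkend : ¬ ∃ x, (p k, x) ∈ B := Nat.find_spec hexk
    have hkmem : ∀ n < k, ∃ x, (p n, x) ∈ B := fun n hn => not_not.1 (Nat.find_min hexk hn)
    have hchain : ∀ n, n < k → ∃ x, (p n, x) ∈ B ∧ (p (n + 1), x) ∈ A := by
      intro n hn
      rw [hpsucc n]
      exact hstep (p n) (hkmem n hn)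
    refine ⟨k, p, hq0, hchain, ?_⟩
    -- it remains to show that the walk ends at u
    by_contra hku
    have hpinj : ∀ i, i ≤ k → ∀ j, j ≤ k → p i = p j → i = j := by
      intro i hi j hj h
      exact (chain_eq hR'inj i j p p (fun n hn => hchain n (lt_of_lt_of_le hn hi))
        (fun n hn => hchain n (lt_of_lt_of_le hn hj)) hstart hstart h).1
    have hxx0 : ∀ n, ∃ x, n < k → (p n, x) ∈ B ∧ (p (n + 1), x) ∈ A := by
      intro n
      by_cases h : n < k
      · obtain ⟨x, h1, h2⟩ := hchain n h
        exact ⟨x, fun _ => ⟨h1, h2⟩⟩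
      · exact ⟨c, fun h' => absurd h' h⟩
    choose xx hxx using hxx0
    have hxxB : ∀ n, n < k → (p n, xx n) ∈ B := fun n hn => (hxx n hn).1
    have hxxA : ∀ n, n < k → (p (n + 1), xx n) ∈ A := fun n hn => (hxx n hn).2
    -- the A-edge at p i
    set ff : ℕ → U × V := fun i => Nat.casesOn i (p 0, c) (fun m => (p (m + 1), xx m)) with hffdef
    have hff0 : ff 0 = (p 0, c) := rfl
    have hffsucc : ∀ m, ff (m + 1) = (p (m + 1), xx m) := fun m => rfl
    have hfffst : ∀ i, (ff i).1 = p i := by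
      intro i
      cases i with
      | zero => rfl
      | succ m => rfl
    have hffA : ∀ i, i ≤ k → ff i ∈ A := by
      intro i hi
      cases i with
      | zero => exact hq0
      | succ m => exact hxxA m (by omega)
    have hxxinj : ∀ i, i < k → ∀ j, j < k → xx i = xx j → i = j := by
      intro i hi j hj h
      have := hA.1.right_unique (hxxA i hi) (h ▸ hxxA j hj)
      have := hpinj (i + 1) (by omega) (j + 1) (by omega) this
      omega
    have hcxx : ∀ i, i < k → c ≠ xx i := by
      intro i hi h
      exact hcB (mem_image_snd.2 ⟨p i, h ▸ hxxB i hi⟩)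
    set Es := (Finset.range k).image (fun i => (p i, xx i)) with hEsdef
    set Fs := (Finset.range (k + 1)).image ff with hFsdef
    have hEsmem : ∀ i, i < k → (p i, xx i) ∈ Es :=
      fun i hi => Finset.mem_image.2 ⟨i, Finset.mem_range.2 hi, rfl⟩
    have hFsmem : ∀ i, i ≤ k → ff i ∈ Fs :=
      fun i hi => Finset.mem_image.2 ⟨i, Finset.mem_range.2 (by omega), rfl⟩
    have hEselim : ∀ e ∈ Es, ∃ i, i < k ∧ e = (p i, xx i) := by
      intro e he
      obtain ⟨i, hi, rfl⟩ := Finset.mem_image.1 he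
      exact ⟨i, Finset.mem_range.1 hi, rfl⟩
    have hFselim : ∀ e ∈ Fs, ∃ i, i ≤ k ∧ e = ff i := by
      intro e he
      obtain ⟨i, hi, rfl⟩ := Finset.mem_image.1 he
      have := Finset.mem_range.1 hi
      exact ⟨i, by omega, rfl⟩
    have hEsB : Es ⊆ B := by
      intro e he
      obtain ⟨i, hi, rfl⟩ := hEselim e he
      exact hxxB i hi
    have hFsA : Fs ⊆ A := by
      intro e he
      obtain ⟨i, hi, rfl⟩ := hFselim e he
      exact hffA i hi
    -- any A-edge touching the walk is in Fs
    have hmixA : ∀ e₁ ∈ A, ∀ i, i < k → (e₁.1 = p i ∨ e₁.2 = xx i) → e₁ ∈ Fs := by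
      rintro ⟨q, y⟩ he₁ i hi (h | h)
      · simp only at h
        subst h
        have h2 := hffA i (le_of_lt hi)
        have h3 : ((ff i).1, y) ∈ A := by rw [hfffst]; exact he₁
        have := hA.1.left_unique h3 (by rw [← (Prod.mk.eta (p := ff i))] at h2; exact h2)
        subst this
        have : (p i, ((ff i).2)) = ff i := by rw [← hfffst i]
        rw [this]
        exact hFsmem i (le_of_lt hi)
      · simp only at h
        subst h
        have := hA.1.right_unique he₁ (hxxA i hi)
        subst this
        rw [← hffsucc i]
        exact hFsmem (i + 1) (by omega)
    -- any B-edge touching an Fs edge is in Es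
    have hmixB : ∀ e₁ ∈ B, ∀ i, i ≤ k → (e₁.1 = (ff i).1 ∨ e₁.2 = (ff i).2) → e₁ ∈ Es := by
      rintro ⟨q, y⟩ he₁ i hi (h | h)
      · simp only [hfffst] at h
        subst h
        rcases Nat.lt_or_ge i k with hik | hik
        · have := hB.1.left_unique he₁ (hxxB i hik)
          subst this
          exact hEsmem i hik
        · have : i = k := by omega
          subst this
          exact absurd ⟨y, he₁⟩ hkend
      · simp only at h
        cases i with
        | zero =>
          rw [hff0] at h
          simp only at h
          subst h
          exact absurd (mem_image_snd.2 ⟨q, he₁⟩) hcB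
        | succ m =>
          rw [hffsucc] at h
          simp only at h
          subst h
          have hm : m < k := by omega
          have := hB.1.right_unique he₁ (hxxB m hm)
          subst this
          exact hEsmem m hm
    have hdisj1 : Disjoint (A \ Fs) Es := by
      rw [Finset.disjoint_left]
      intro e he heE
      obtain ⟨hA', hnF⟩ := Finset.mem_sdiff.1 he
      obtain ⟨i, hi, rfl⟩ := hEselim e heE
      exact hnF (hmixA _ hA' i hi (Or.inl rfl))
    have hdisj2 : Disjoint (B \ Es) Fs := by
      rw [Finset.disjoint_left]
      intro e he heF
      obtain ⟨hB', hnE⟩ := Finset.mem_sdiff.1 he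
      obtain ⟨i, hi, rfl⟩ := hFselim e heF
      exact hnE (hmixB _ hB' i hi (Or.inl rfl))
    have hNmatch : IsMatching (restrictL E U') ((A \ Fs) ∪ Es) := by
      constructor
      · intro e he
        rcases Finset.mem_union.1 he with h | h
        · exact hA.1.1 (Finset.mem_sdiff.1 h).1
        · exact restrictL_mono E hsub (hB.1.1 (hEsB h))
      · intro e₁ h₁ e₂ h₂ hsh
        rcases Finset.mem_union.1 h₁ with h₁ | h₁ <;> rcases Finset.mem_union.1 h₂ with h₂ | h₂
        · exact hA.1.2 _ (Finset.mem_sdiff.1 h₁).1 _ (Finset.mem_sdiff.1 h₂).1 hsh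
        · exfalso
          obtain ⟨i, hi, rfl⟩ := hEselim _ h₂
          exact (Finset.mem_sdiff.1 h₁).2 (hmixA _ (Finset.mem_sdiff.1 h₁).1 i hi hsh)
        · exfalso
          obtain ⟨i, hi, rfl⟩ := hEselim _ h₁
          exact (Finset.mem_sdiff.1 h₂).2
            (hmixA _ (Finset.mem_sdiff.1 h₂).1 i hi (hsh.imp Eq.symm Eq.symm))
        · exact hB.1.2 _ (hEsB h₁) _ (hEsB h₂) hsh
    have hNne : (A \ Fs) ∪ Es ≠ A := by
      intro h
      have h1 : ff 0 ∈ A := hffA 0 (Nat.zero_le k)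
      have h2 : ff 0 ∈ (A \ Fs) ∪ Es := h.symm ▸ h1
      rcases Finset.mem_union.1 h2 with h3 | h3
      · exact (Finset.mem_sdiff.1 h3).2 (hFsmem 0 (Nat.zero_le k))
      · obtain ⟨i, hi, heq⟩ := hEselim _ h3
        rw [hff0] at heq
        exact hcxx i hi (congrArg Prod.snd heq)
    have hlt1 : mWeight w Es < mWeight w Fs :=
      exchange_lt hdist (restrictL_subset E U') hA hFsA hdisj1 hNmatch hNne
    have hN'match : IsMatching (restrictL E (U'.erase u)) ((B \ Es) ∪ Fs) := by
      constructor
      · intro e he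
        rcases Finset.mem_union.1 he with h | h
        · exact hB.1.1 (Finset.mem_sdiff.1 h).1
        · obtain ⟨i, hi, rfl⟩ := hFselim _ h
          refine mem_restrictL.2 ⟨restrictL_subset E U' (hA.1.1 (hffA i hi)), ?_⟩
          rw [hfffst]
          rcases Nat.lt_or_ge i k with hik | hik
          · exact (mem_restrictL.1 (hB.1.1 (hxxB i hik))).2
          · have : i = k := by omega
            subst this
            refine Finset.mem_erase.2 ⟨hku, ?_⟩
            have := mem_restrictL.1 (hA.1.1 (hffA k le_rfl))
            rw [hfffst] at this
            exact this.2
      · intro e₁ h₁ e₂ h₂ hsh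
        rcases Finset.mem_union.1 h₁ with h₁ | h₁ <;> rcases Finset.mem_union.1 h₂ with h₂ | h₂
        · exact hB.1.2 _ (Finset.mem_sdiff.1 h₁).1 _ (Finset.mem_sdiff.1 h₂).1 hsh
        · exfalso
          obtain ⟨i, hi, rfl⟩ := hFselim _ h₂
          exact (Finset.mem_sdiff.1 h₁).2 (hmixB _ (Finset.mem_sdiff.1 h₁).1 i hi hsh)
        · exfalso
          obtain ⟨i, hi, rfl⟩ := hFselim _ h₁
          exact (Finset.mem_sdiff.1 h₂).2
            (hmixB _ (Finset.mem_sdiff.1 h₂).1 i hi (hsh.imp Eq.symm Eq.symm))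
        · exact hA.1.2 _ (hFsA h₁) _ (hFsA h₂) hsh
    have hN'ne : (B \ Es) ∪ Fs ≠ B := by
      intro h
      have h1 : ff k ∈ (B \ Es) ∪ Fs := Finset.mem_union_right _ (hFsmem k le_rfl)
      rw [h] at h1
      refine hkend ⟨(ff k).2, ?_⟩
      have : (p k, (ff k).2) = ff k := by rw [← hfffst k]
      rw [this]
      exact h1
    have hlt2 : mWeight w Fs < mWeight w Es :=
      exchange_lt hdist (restrictL_subset E (U'.erase u)) hB hEsB hdisj2 hN'match hN'ne
    linarith
  -- now use uniqueness of chains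
  obtain ⟨ka, pa, hpa0, hpach, hpaend⟩ := walk a ha hanB
  obtain ⟨kb, pb, hpb0, hpbch, hpbend⟩ := walk b hb hbnB
  have hstarta : ∀ x, ¬ ∃ s, (x, s) ∈ B ∧ (pa 0, s) ∈ A := by
    rintro x ⟨s, hsB, hsA⟩
    have : a = s := hA.1.left_unique hpa0 hsA
    subst this
    exact hanB (mem_image_snd.2 ⟨x, hsB⟩)
  have hstartb : ∀ x, ¬ ∃ s, (x, s) ∈ B ∧ (pb 0, s) ∈ A := by
    rintro x ⟨s, hsB, hsA⟩
    have : b = s := hA.1.left_unique hpb0 hsA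
    subst this
    exact hbnB (mem_image_snd.2 ⟨x, hsB⟩)
  have hend : pa ka = pb kb := by rw [hpaend, hpbend]
  have h00 : pa 0 = pb 0 :=
    (chain_eq hR'inj ka kb pa pb hpach hpbch hstarta hstartb hend).2
  exact hA.1.left_unique hpa0 (h00.symm ▸ hpb0)

/-- The family `𝓕 = { F(U') : U' ⊆ U }` induced by a weighted matching
instance with pairwise distinct matching weights is accessible. -/
theorem mm_family_accessible {U V : Type*} [Fintype U] [Fintype V]
    (E : Finset (U × V)) (w : U × V → ℝ)
    (hdist : DistinctWeights E w) :
    ∀ X ∈ mmFamily E w, X ≠ ∅ →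
      ∃ v ∈ X, X.erase v ∈ mmFamily E w := by
  intro X hX hXne
  obtain ⟨U₀, M₀, hM₀, hXM₀⟩ := hX
  set S : Finset (Finset (U × V)) := Finset.univ.filter
    (fun M => (∃ U₁ : Finset U, IsMaxMatching (restrictL E U₁) w M) ∧
      X = M.image Prod.snd) with hSdef
  have hSne : S.Nonempty := ⟨M₀, Finset.mem_filter.2 ⟨Finset.mem_univ _, ⟨U₀, hM₀⟩, hXM₀⟩⟩
  obtain ⟨A, hAS, hAmin⟩ := Finset.exists_min_image S (mWeight w) hSne
  obtain ⟨⟨U₁, hAmax₁⟩, hXA⟩ := (Finset.mem_filter.1 hAS).2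
  have hA : IsMaxMatching (restrictL E (A.image Prod.fst)) w A :=
    maxMatching_restrict_image hAmax₁
  set U' := A.image Prod.fst with hU'def
  have hUA : U' ⊆ A.image Prod.fst := Finset.Subset.refl _
  have hAne : A.Nonempty := by
    rcases A.eq_empty_or_nonempty with h | h
    · exfalso
      apply hXne
      rw [hXA, h, Finset.image_empty]
    · exact h
  obtain ⟨e, he⟩ := hAne
  set u := e.1 with hudef
  have huU : u ∈ U' := Finset.mem_image.2 ⟨e, he, rfl⟩
  obtain ⟨B, hB⟩ := exists_maxMatching (restrictL E (U'.erase u)) w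
  have hBA : B.image Prod.snd ⊆ A.image Prod.snd :=
    image_snd_subset hdist (Finset.erase_subset u U') hA hB hUA
  have hABne : B ≠ A := by
    intro h
    have h1 : e ∈ B := h.symm ▸ he
    have h2 := (mem_restrictL.1 (hB.1.1 h1)).2
    exact (Finset.mem_erase.1 h2).1 rfl
  have hwBA : mWeight w B < mWeight w A := by
    have hle : mWeight w B ≤ mWeight w A :=
      hA.2 B (hB.1.mono (restrictL_mono E (Finset.erase_subset u U')))
    have hne := hdist B A (hB.1.mono (restrictL_subset E (U'.erase u)))
      (hA.1.mono (restrictL_subset E U')) hABne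
    exact lt_of_le_of_ne hle hne
  by_cases hAB : A.image Prod.snd ⊆ B.image Prod.snd
  · exfalso
    have hBS : B ∈ S := Finset.mem_filter.2 ⟨Finset.mem_univ _, ⟨U'.erase u, hB⟩,
      hXA.trans (subset_antisymm hAB hBA)⟩
    exact absurd (hAmin B hBS) (not_le.2 hwBA)
  · obtain ⟨a, haA, hanB⟩ := Finset.not_subset.1 hAB
    refine ⟨a, by rw [hXA]; exact haA, ?_⟩
    refine ⟨U'.erase u, B, hB, ?_⟩
    ext x
    constructor
    · intro hx
      obtain ⟨hxa, hxX⟩ := Finset.mem_erase.1 hx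
      rw [hXA] at hxX
      by_contra hxB
      exact hxa (lost_unique hdist hA hB hBA hxX hxB haA hanB)
    · intro hx
      refine Finset.mem_erase.2 ⟨?_, ?_⟩
      · rintro rfl
        exact hanB hx
      · rw [hXA]
        exact hBA hx
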